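/- arXiv:1611.08693 — 2 statements merged into one kernel-verified Lean document; each statement's English description precedes it below -/
import Mathlib

section
/- Let χ be a primitive Dirichlet character mod f with χ(-1) = 1 (an even character). Then for every positive integer n, L(2n, χ) = (-1)^{n+1} · (τ(χ)/2) · (2π/f)^{2n} · B_{2n, χ̄} / (2n)!, where τ(χ) = ∑_{a mod f} χ(a) e^{2πi a/f} is the Gauss sum and B_{k,χ} denotes the k-th generalized Bernoulli number attached to χ. -/
open scoped BigOperators

/-- The Gauss sum `τ(χ) = ∑_{a mod f} χ(a) e^{2πi a/f}` of a Dirichlet character mod `f`. -/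
noncomputable def dirGaussSum {f : ℕ} [NeZero f] (χ : DirichletCharacter ℂ f) : ℂ :=
  ∑ a : ZMod f, χ a * Complex.exp (2 * Real.pi * Complex.I * (a.val : ℂ) / (f : ℂ))

/-- The `k`-th generalized Bernoulli number `B_{k,χ} = f^{k-1} ∑_{a mod f} χ(a) B_k(a/f)`
attached to a Dirichlet character mod `f`, via Bernoulli polynomials. -/
noncomputable def genBernoulli {f : ℕ} [NeZero f] (χ : ZMod f → ℂ) (k : ℕ) : ℂ :=
  (f : ℂ) ^ (k - 1 : ℤ) *
    ∑ a : ZMod f, χ a * (((Polynomial.bernoulli k).eval ((a.val : ℚ) / (f : ℚ)) : ℚ) : ℂ)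

open Finset Complex ZMod HurwitzZeta in
/-- Leopoldt's formula for even `L`-values of an even primitive Dirichlet character:
`L(2n, χ) = (-1)^(n+1) (τ(χ)/2) (2π/f)^(2n) B_{2n,χ̄}/(2n)!`. -/
theorem LFunction_even_character_even_value {f : ℕ} [NeZero f]
    (χ : DirichletCharacter ℂ f) (hprim : χ.IsPrimitive) (heven : χ.Even)
    (n : ℕ) (hn : 0 < n) :
    DirichletCharacter.LFunction χ (2 * n) =
      (-1) ^ (n + 1) * (dirGaussSum χ / 2) * (2 * Real.pi / f : ℂ) ^ (2 * n) *
        genBernoulli (fun a => (starRingEnd ℂ) (χ a)) (2 * n) /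
          (Nat.factorial (2 * n) : ℂ) := by
  have hfne : (f : ℂ) ≠ 0 := Nat.cast_ne_zero.mpr (NeZero.ne f)
  have hfpos : (0 : ℝ) < f := Nat.cast_pos.mpr (NeZero.pos f)
  set τ : ℂ := gaussSum χ stdAddChar with hτ
  -- the Gauss sum in the statement is `gaussSum χ stdAddChar`
  have hg : dirGaussSum χ = τ := by
    simp only [dirGaussSum, hτ, gaussSum, stdAddChar_apply, toCircle_apply]
  -- χ⁻¹ is even
  have hinv_even : ∀ j : ZMod f, χ⁻¹ (-j) = χ⁻¹ j := by
    intro j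
    rw [show -j = (-1) * j by ring, map_mul, MulChar.inv_apply_eq_inv' χ (-1), heven, inv_one,
      one_mul]
  -- the Fourier transform of `(τ/f) • χ⁻¹` is `χ`
  have key : ZMod.dft (fun j : ZMod f => τ / f * χ⁻¹ j) = ⇑χ := by
    rw [ZMod.dft_const_mul]
    funext j
    have h1 : ZMod.dft ⇑χ = fun k => χ⁻¹ (-k) * τ := by
      funext k; exact hprim.fourierTransform_eq_inv_mul_gaussSum k
    have h2 := congrFun (ZMod.dft_dft (⇑χ)) (-j)
    rw [h1] at h2
    have h3 : ZMod.dft (fun k => χ⁻¹ (-k) * τ) (-j) = ZMod.dft ⇑χ⁻¹ j * τ := by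
      simp only [ZMod.dft_mul_const, ZMod.dft_comp_neg, neg_neg]
    rw [h3, neg_neg, smul_eq_mul] at h2
    rw [div_mul_eq_mul_div, div_eq_iff hfne]
    linear_combination h2
  -- `2n ≠ 1` in `ℂ`
  have hs1 : (2 * (n : ℂ)) ≠ 1 := by
    rw [show (2 * (n : ℂ)) = ((2 * n : ℕ) : ℂ) by push_cast; ring, Ne, Nat.cast_eq_one]
    omega
  -- express the L-function via the Fourier expansion
  have step1 : DirichletCharacter.LFunction χ (2 * n) =
      ∑ j : ZMod f, (τ / f * χ⁻¹ j) * expZeta (toAddCircle (-j)) (2 * n) := by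
    rw [DirichletCharacter.LFunction, ← key, ZMod.LFunction_dft _ (Or.inr hs1)]
  -- symmetrize using evenness, to get cosZeta
  have hflip : ∑ j : ZMod f, χ⁻¹ j * expZeta (toAddCircle j) (2 * n)
      = ∑ j : ZMod f, χ⁻¹ j * expZeta (toAddCircle (-j)) (2 * n) := by
    refine Fintype.sum_equiv (Equiv.neg _) _ _ fun j => ?_
    rw [Equiv.neg_apply, hinv_even, neg_neg]
  have step2 : ∑ j : ZMod f, (τ / f * χ⁻¹ j) * expZeta (toAddCircle (-j)) (2 * n)
      = τ / f * ∑ j : ZMod f, χ⁻¹ j * cosZeta (toAddCircle j) (2 * n) := by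
    have : ∑ j : ZMod f, χ⁻¹ j * cosZeta (toAddCircle j) (2 * n)
        = ∑ j : ZMod f, (χ⁻¹ j * expZeta (toAddCircle j) (2 * n)
            + χ⁻¹ j * expZeta (toAddCircle (-j)) (2 * n)) / 2 := by
      refine Finset.sum_congr rfl fun j _ => ?_
      rw [cosZeta_eq, map_neg]
      ring
    rw [this, ← Finset.sum_div, Finset.sum_add_distrib, hflip, ← two_mul, mul_div_cancel_left₀ _
      (two_ne_zero), mul_sum]
    refine Finset.sum_congr rfl fun j _ => by ring
  -- evaluate cosZeta at the even integer 2n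
  have hval : ∀ j : ZMod f, cosZeta (toAddCircle j) (2 * n)
      = (-1) ^ (n + 1) * (2 * (Real.pi : ℂ)) ^ (2 * n) / 2 / (Nat.factorial (2 * n) : ℂ)
          * (((Polynomial.bernoulli (2 * n)).eval ((j.val : ℚ) / (f : ℚ)) : ℚ) : ℂ) := by
    intro j
    have hx : ((j.val : ℝ) / f) ∈ Set.Icc (0 : ℝ) 1 := by
      constructor
      · positivity
      · rw [div_le_one hfpos]
        exact_mod_cast (ZMod.val_lt j).le
    have := cosZeta_two_mul_nat (k := n) (x := (j.val : ℝ) / f) hn.ne' hx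
    rw [toAddCircle_apply, this]
    congr 1
    rw [Polynomial.eval_map, show (((j.val : ℝ) / f : ℝ) : ℂ) = algebraMap ℚ ℂ ((j.val : ℚ) / f)
      by rw [eq_ratCast]; push_cast; ring, Polynomial.eval₂_hom, eq_ratCast]
  -- put everything together
  rw [step1, step2]
  have hB : genBernoulli (fun a => (starRingEnd ℂ) (χ a)) (2 * n)
      = (f : ℂ) ^ (2 * n - 1) *
          ∑ j : ZMod f, χ⁻¹ j * (((Polynomial.bernoulli (2 * n)).eval
            ((j.val : ℚ) / (f : ℚ)) : ℚ) : ℂ) := by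
    rw [genBernoulli, show ((2 * n : ℕ) - 1 : ℤ) = ((2 * n - 1 : ℕ) : ℤ) by omega,
      zpow_natCast]
    congr 1
    refine Finset.sum_congr rfl fun j _ => ?_
    congr 1
    rw [← MulChar.star_apply' χ j, RCLike.star_def]
  rw [hB, hg]
  have hfpow : (f : ℂ) ^ (2 * n) = (f : ℂ) ^ (2 * n - 1) * f := by
    rw [← pow_succ]
    congr 1
    omega
  have hsum : ∑ j : ZMod f, χ⁻¹ j * cosZeta (toAddCircle j) (2 * n)
      = (-1) ^ (n + 1) * (2 * (Real.pi : ℂ)) ^ (2 * n) / 2 / (Nat.factorial (2 * n) : ℂ)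
          * ∑ j : ZMod f, χ⁻¹ j * (((Polynomial.bernoulli (2 * n)).eval
            ((j.val : ℚ) / (f : ℚ)) : ℚ) : ℂ) := by
    rw [mul_sum]
    refine Finset.sum_congr rfl fun j _ => ?_
    rw [hval j]
    ring
  rw [hsum, div_pow, hfpow]
  have hfpow_ne : (f : ℂ) ^ (2 * n - 1) ≠ 0 := pow_ne_zero _ hfne
  have hfact : ((Nat.factorial (2 * n) : ℂ)) ≠ 0 := Nat.cast_ne_zero.mpr (Nat.factorial_ne_zero _)
  field_simp
end

section
/- For κ = 1 and the kernel identity underlying Perron's formula: for y > 0 with y ≠ 1 and C > 0, (1/2πi) ∫_{(C)} y^w / (w(w+1)) dw = (1 - 1/y) if y > 1, and 0 if 0 < y < 1. -/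
/-!
`1 / (s * (s + 1)) = 1 / s - 1 / (s + 1)` is the Mellin transform of the Riesz weight
`x ↦ (1 - x)₊` on `(0, ∞)`, for `0 < re s`. On the line `re s = C` this kernel is bounded by
`1 / |s|²`, hence integrable, and the weight is continuous on `(0, ∞)`, so Mellin inversion
recovers the weight; at `x = 1 / y` the weight is `1 - 1 / y` for `y > 1` and `0` otherwise, and
`(1 / y) ^ (-s) = y ^ s` turns the inverse transform into the Perron integral.
-/

open Complex MeasureTheory Set

noncomputable def rieszWeight : ℝ → ℂ := indicator (Ioc 0 1) fun t => 1 - (t : ℂ)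

theorem hasMellin_rieszWeight {s : ℂ} (hs : 0 < s.re) :
    HasMellin rieszWeight s (1 / (s * (s + 1))) := by
  have hs0 : s ≠ 0 := by rintro rfl; simp at hs
  have hs1 : s + 1 ≠ 0 := ne_of_apply_ne re (by simp; linarith)
  have h1 := hasMellin_one_Ioc hs
  have ht := hasMellin_cpow_Ioc 1 (s := s) (by simpa using hs.trans (lt_add_one _))
  have hsub := hasMellin_sub h1.1 ht.1
  rw [h1.2, ht.2, div_sub_div _ _ hs0 hs1, one_mul, mul_one, add_sub_cancel_left] at hsub
  have hfun : (fun t : ℝ => (Ioc 0 1).indicator (fun _ => (1 : ℂ)) t -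
      (Ioc 0 1).indicator (fun t : ℝ => (t : ℂ) ^ (1 : ℂ)) t) = rieszWeight := by
    funext t
    by_cases ht : t ∈ Ioc 0 1 <;> simp [rieszWeight, ht]
  rwa [hfun] at hsub

theorem continuousAt_rieszWeight {x : ℝ} (hx : 0 < x) : ContinuousAt rieszWeight x := by
  have heq : rieszWeight =ᶠ[nhds x] fun t => ((max (1 - t) 0 : ℝ) : ℂ) := by
    filter_upwards [lt_mem_nhds hx] with t ht
    by_cases h : t ≤ 1
    · simp [rieszWeight, ht, h]
    · simp [rieszWeight, h, (not_le.1 h).le]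
  exact ContinuousAt.congr (by fun_prop) heq.symm

theorem norm_one_div_mul_add_one_le {s : ℂ} (hs : 0 < s.re) :
    ‖1 / (s * (s + 1))‖ ≤ (s.re ^ 2 + s.im ^ 2)⁻¹ := by
  have hsq : ‖s‖ ^ 2 = s.re ^ 2 + s.im ^ 2 := by
    rw [Complex.sq_norm, normSq_apply]; ring
  have hle : ‖s‖ ≤ ‖s + 1‖ := by
    rw [norm_def, norm_def]
    gcongr
    simp only [normSq_apply, add_re, add_im, one_re, one_im]
    nlinarith
  have hpos : 0 < ‖s‖ := norm_pos_iff.2 (by rintro rfl; simp at hs)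
  rw [one_div, norm_inv, norm_mul, ← hsq, sq]
  gcongr

theorem verticalIntegrable_one_div_mul_add_one {σ : ℝ} (hσ : 0 < σ) :
    VerticalIntegrable (fun s => 1 / (s * (s + 1))) σ := by
  have hmaj : Integrable fun t : ℝ => (σ ^ 2)⁻¹ * (1 + (t / σ) ^ 2)⁻¹ :=
    (integrable_inv_one_add_sq.comp_div hσ.ne').const_mul _
  refine hmaj.mono' (Measurable.aestronglyMeasurable (by fun_prop))
    (Filter.Eventually.of_forall fun t => ?_)
  have hmaj_eq : (σ ^ 2)⁻¹ * (1 + (t / σ) ^ 2)⁻¹ = (σ ^ 2 + t ^ 2)⁻¹ := by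
    field_simp
  simpa [hmaj_eq] using norm_one_div_mul_add_one_le (s := σ + t * I) (by simpa using hσ)

theorem mellinInv_one_div_mul_add_one {σ x : ℝ} (hσ : 0 < σ) (hx : 0 < x) :
    mellinInv σ (fun s => 1 / (s * (s + 1))) x = rieszWeight x := by
  have hline : ∀ t : ℝ, mellin rieszWeight (σ + t * I) = 1 / ((σ + t * I) * (σ + t * I + 1)) :=
    fun t => (hasMellin_rieszWeight (by simpa using hσ)).2
  have hint : VerticalIntegrable (mellin rieszWeight) σ := by
    simpa only [VerticalIntegrable, hline] using verticalIntegrable_one_div_mul_add_one hσ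
  rw [← mellinInv_mellin_eq σ rieszWeight hx (hasMellin_rieszWeight (by simpa using hσ)).1
    hint (continuousAt_rieszWeight hx)]
  simp only [mellinInv, hline]

theorem rieszWeight_inv {y : ℝ} (hy : 0 < y) :
    rieszWeight y⁻¹ = if 1 < y then 1 - 1 / (y : ℂ) else 0 := by
  rcases lt_trichotomy y 1 with h | rfl | h
  · simp [rieszWeight, h.not_gt, (one_lt_inv₀ hy).2 h]
  · simp [rieszWeight]
  · simp [rieszWeight, h, hy, (inv_lt_one₀ hy).2 h |>.le]

theorem perron_kernel_order_one_general (y : ℝ) (hy : 0 < y) (C : ℝ) (hC : 0 < C) :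
    (1 / (2 * Real.pi * Complex.I)) *
        ∫ t : ℝ, ((y : ℂ) ^ ((C : ℂ) + t * Complex.I) /
          (((C : ℂ) + t * Complex.I) * (((C : ℂ) + t * Complex.I) + 1))) * Complex.I =
      if 1 < y then 1 - 1 / (y : ℂ) else 0 := by
  have hcpow : ∀ w : ℂ, ((y⁻¹ : ℝ) : ℂ) ^ (-w) = (y : ℂ) ^ w := fun w => by
    rw [ofReal_inv, inv_cpow _ _ (by simp [arg_ofReal_of_nonneg hy.le, Real.pi_ne_zero.symm]),
      cpow_neg, inv_inv]
  rw [← rieszWeight_inv hy, ← mellinInv_one_div_mul_add_one hC (inv_pos.2 hy), mellinInv,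
    integral_mul_const]
  simp only [hcpow, smul_eq_mul, mul_one_div, real_smul]
  push_cast
  field_simp

/-- The Mellin–Perron kernel evaluation for `κ = 1`: for `y > 0`, `y ≠ 1`, `C > 0`,
`(1/2πi) ∫_{(C)} y^w/(w(w+1)) dw` equals `1 - 1/y` if `y > 1` and `0` if `y < 1`. -/
theorem perron_kernel_order_one (y : ℝ) (hy : 0 < y) (hy1 : y ≠ 1) (C : ℝ) (hC : 0 < C) :
    (1 / (2 * Real.pi * Complex.I)) *
        ∫ t : ℝ, ((y : ℂ) ^ ((C : ℂ) + t * Complex.I) /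
          (((C : ℂ) + t * Complex.I) * (((C : ℂ) + t * Complex.I) + 1))) * Complex.I =
      if 1 < y then 1 - 1 / (y : ℂ) else 0 :=
  perron_kernel_order_one_general y hy C hC
end
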